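/- arXiv:1609.09572 — 3 statements merged into one kernel-verified Lean document; each statement's English description precedes it below -/
import Mathlib

section
/- Let $g_j(x)$ be the characteristic polynomial of the $j \times j$ tridiagonal 0-1 matrix $K_j$. For positive integers $k < \ell$, the degree of $\gcd(g_k(x), g_\ell(x))$ in $\mathbb{Q}[x]$ equals $\gcd(k+1, \ell+1) - 1$. -/
open Polynomial

/-- The `j × j` tridiagonal 0-1 matrix with ones on the super- and subdiagonal. -/
def Kmat (j : ℕ) : Matrix (Fin j) (Fin j) ℚ :=
  Matrix.of fun i k =>
    if (i : ℕ) + 1 = (k : ℕ) then 1 else if (k : ℕ) + 1 = (i : ℕ) then 1 else 0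

/-- The Fibonacci-like polynomial sequence `h 0 = 0`, `h 1 = 1`,
`h (n+2) = X * h (n+1) - h n`. -/
noncomputable def hp : ℕ → Polynomial ℚ
  | 0 => 0
  | 1 => 1
  | (n + 2) => Polynomial.X * hp (n + 1) - hp n

lemma hp_zero : hp 0 = 0 := rfl
lemma hp_one : hp 1 = 1 := rfl
lemma hp_add_two (n : ℕ) : hp (n + 2) = Polynomial.X * hp (n + 1) - hp n := rfl

/-- Entrywise description of the characteristic matrix of `Kmat`. -/
lemma Kmat_apply (j : ℕ) (i k : Fin j) :
    Kmat j i k = if (i : ℕ) + 1 = (k : ℕ) then 1 else if (k : ℕ) + 1 = (i : ℕ) then 1 else 0 :=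
  rfl

/-- Shift-invariance: submatrices of the charmatrix along a common shift. -/
lemma charmatrix_Kmat_submatrix {n m t : ℕ} (f g : Fin m → Fin n)
    (hf : ∀ i, (f i : ℕ) = (i : ℕ) + t) (hg : ∀ i, (g i : ℕ) = (i : ℕ) + t) :
    (Matrix.charmatrix (Kmat n)).submatrix f g = Matrix.charmatrix (Kmat m) := by
  ext i k
  rw [Matrix.submatrix_apply]
  by_cases h : i = k
  · subst h
    have : f i = g i := Fin.ext (by rw [hf, hg])
    rw [this, Matrix.charmatrix_apply_eq, Matrix.charmatrix_apply_eq,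
      Kmat_apply, Kmat_apply]
    simp
  · have hfg : f i ≠ g k := by
      intro he
      apply h
      apply Fin.ext
      have := congrArg Fin.val he
      rw [hf, hg] at this
      omega
    rw [Matrix.charmatrix_apply_ne _ _ _ hfg, Matrix.charmatrix_apply_ne _ _ _ h,
      Kmat_apply, Kmat_apply, hf, hg]
    simp only [show ((i:ℕ) + t + 1 = (k:ℕ) + t) ↔ ((i:ℕ) + 1 = (k:ℕ)) from by omega,
      show ((k:ℕ) + t + 1 = (i:ℕ) + t) ↔ ((k:ℕ) + 1 = (i:ℕ)) from by omega]

lemma charpoly_Kmat : ∀ j, (Kmat j).charpoly = hp (j + 1) := by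
  intro j
  induction j using Nat.twoStepInduction with
  | zero =>
    rw [Matrix.charpoly, Matrix.det_isEmpty, hp_one]
  | one =>
    rw [Matrix.charpoly, Matrix.det_fin_one, Matrix.charmatrix_apply_eq, Kmat_apply]
    simp [hp_add_two, hp_one, hp_zero]
  | more n ih2 ih1 =>
    rw [Matrix.charpoly]
    set A := Matrix.charmatrix (Kmat (n + 2)) with hA
    rw [Matrix.det_succ_column_zero]
    rw [Fin.sum_univ_succ, Fin.sum_univ_succ]
    have hz : ∀ i : Fin n, A i.succ.succ 0 = 0 := by
      intro i
      rw [hA, Matrix.charmatrix_apply_ne _ _ _ (by simp [Fin.ext_iff]), Kmat_apply]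
      have : ¬ ((i.succ.succ : ℕ) + 1 = ((0 : Fin (n+2)) : ℕ)) := by simp
      rw [if_neg this, if_neg (by simp)]
      simp
    have hsum0 : ∑ i : Fin n,
        (-1 : Polynomial ℚ) ^ ((i.succ.succ : ℕ)) * A i.succ.succ 0 *
          (A.submatrix i.succ.succ.succAbove Fin.succ).det = 0 := by
      apply Finset.sum_eq_zero
      intro i _
      rw [hz i]; ring
    rw [hsum0, add_zero]
    have hA00 : A 0 0 = Polynomial.X := by
      rw [hA, Matrix.charmatrix_apply_eq, Kmat_apply]; simp
    have hA10 : A (Fin.succ 0) 0 = -1 := by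
      rw [hA, Matrix.charmatrix_apply_ne _ _ _ (by simp [Fin.ext_iff]), Kmat_apply]
      norm_num [Fin.ext_iff]
    have hsub0 : A.submatrix (Fin.succAbove 0) Fin.succ = Matrix.charmatrix (Kmat (n + 1)) := by
      apply charmatrix_Kmat_submatrix (t := 1)
      · intro i; simp [Fin.succAbove, Fin.lt_def]
      · intro i; simp
    -- second term: expand the minor along its first row
    set B := A.submatrix (Fin.succ (0 : Fin (n+1))).succAbove Fin.succ with hB
    have hBdet : B.det = -(Kmat n).charpoly := by
      rw [Matrix.det_succ_row_zero, Fin.sum_univ_succ]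
      have hB00 : B 0 0 = -1 := by
        rw [hB, Matrix.submatrix_apply]
        have h1 : ((Fin.succ (0 : Fin (n+1))).succAbove (0 : Fin (n+1))) = (0 : Fin (n+2)) := by
          simp [Fin.succAbove, Fin.lt_def, Fin.ext_iff]
        rw [h1, hA, Matrix.charmatrix_apply_ne _ _ _ (by simp [Fin.ext_iff]), Kmat_apply]
        norm_num [Fin.ext_iff]
      have hBz : ∀ j : Fin n, B 0 j.succ = 0 := by
        intro j
        rw [hB, Matrix.submatrix_apply]
        have h1 : ((Fin.succ (0 : Fin (n+1))).succAbove (0 : Fin (n+1))) = (0 : Fin (n+2)) := by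
          simp [Fin.succAbove, Fin.lt_def, Fin.ext_iff]
        rw [h1, hA, Matrix.charmatrix_apply_ne _ _ _ (by simp [Fin.ext_iff]), Kmat_apply]
        have : ¬ (((0 : Fin (n+2)) : ℕ) + 1 = ((j.succ.succ : Fin (n+2)) : ℕ)) := by simp
        rw [if_neg this, if_neg (by simp)]
        simp
      have hsum1 : ∑ j : Fin n,
          (-1 : Polynomial ℚ) ^ ((j.succ : ℕ)) * B 0 j.succ *
            (B.submatrix Fin.succ j.succ.succAbove).det = 0 := by
        apply Finset.sum_eq_zero
        intro j _
        rw [hBz j]; ring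
      rw [hsum1, add_zero, hB00]
      have hsub2 : B.submatrix Fin.succ (Fin.succAbove 0) = Matrix.charmatrix (Kmat n) := by
        rw [hB, Matrix.submatrix_submatrix]
        apply charmatrix_Kmat_submatrix (t := 2)
        · intro i
          simp only [Function.comp_apply, Fin.succAbove, Fin.lt_def]
          simp [Fin.succAbove, Fin.lt_def]
        · intro i
          simp [Fin.succAbove, Fin.lt_def]
      rw [hsub2, Matrix.charpoly]
      simp
    rw [hsub0, hBdet, hA00, hA10]
    have h1 : Matrix.det (Matrix.charmatrix (Kmat (n+1))) = (Kmat (n+1)).charpoly := rfl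
    have e : hp (n + 2 + 1) = Polynomial.X * hp (n + 1 + 1) - hp (n + 1) := hp_add_two (n + 1)
    rw [h1, ih1, ih2, e]
    simp only [Fin.val_zero, Fin.val_succ, pow_zero, pow_one, zero_add]
    ring

/-- Consecutive terms are coprime. -/
lemma hp_coprime : ∀ n, IsCoprime (hp n) (hp (n + 1)) := by
  intro n
  induction n with
  | zero => rw [hp_zero]; exact isCoprime_zero_left.mpr isUnit_one
  | succ n ih =>
    obtain ⟨a, b, hab⟩ := ih
    refine ⟨a * Polynomial.X + b, -a, ?_⟩
    rw [hp_add_two]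
    linear_combination hab

/-- Addition formula. -/
lemma hp_add (a : ℕ) : ∀ b, hp (a + b + 1) = hp (a + 1) * hp (b + 1) - hp a * hp b := by
  intro b
  induction b using Nat.twoStepInduction generalizing a with
  | zero => simp [hp_one, hp_zero]
  | one =>
    have : hp 2 = Polynomial.X := by rw [hp_add_two, hp_one, hp_zero]; ring
    rw [show a + 1 + 1 = a + 2 from rfl, hp_add_two, this, hp_one]
    ring
  | more b ih2 ih1 =>
    rw [show a + (b + 2) + 1 = (a + b + 1) + 2 by ring, hp_add_two,
      show a + b + 1 + 1 = a + (b + 1) + 1 by ring, ih1 a, ih2 a,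
      hp_add_two (b + 1), hp_add_two b]
    ring

section gcd
open EuclideanDomain

lemma gcd_assoc_comm (p q : Polynomial ℚ) : Associated (EuclideanDomain.gcd p q) (EuclideanDomain.gcd q p) :=
  associated_of_dvd_dvd
    (EuclideanDomain.dvd_gcd (EuclideanDomain.gcd_dvd_right _ _) (EuclideanDomain.gcd_dvd_left _ _))
    (EuclideanDomain.dvd_gcd (EuclideanDomain.gcd_dvd_right _ _) (EuclideanDomain.gcd_dvd_left _ _))

lemma gcd_assoc_sub_mul (p c w : Polynomial ℚ) : Associated (EuclideanDomain.gcd p (c * p - w)) (EuclideanDomain.gcd p w) := by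
  apply associated_of_dvd_dvd
  · apply EuclideanDomain.dvd_gcd (EuclideanDomain.gcd_dvd_left _ _)
    have h1 := EuclideanDomain.gcd_dvd_left p (c * p - w)
    have h2 := EuclideanDomain.gcd_dvd_right p (c * p - w)
    have h3 := dvd_sub (Dvd.dvd.mul_left h1 c) h2
    have h4 : c * p - (c * p - w) = w := by ring
    rwa [h4] at h3
  · apply EuclideanDomain.dvd_gcd (EuclideanDomain.gcd_dvd_left _ _)
    exact dvd_sub (Dvd.dvd.mul_left (EuclideanDomain.gcd_dvd_left _ _) c)
      (EuclideanDomain.gcd_dvd_right _ _)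

lemma gcd_assoc_coprime_mul (p w u : Polynomial ℚ) (h : IsCoprime p u) :
    Associated (EuclideanDomain.gcd p (w * u)) (EuclideanDomain.gcd p w) := by
  apply associated_of_dvd_dvd
  · apply EuclideanDomain.dvd_gcd (EuclideanDomain.gcd_dvd_left _ _)
    have hcop : IsCoprime (EuclideanDomain.gcd p (w * u)) u :=
      h.of_isCoprime_of_dvd_left (EuclideanDomain.gcd_dvd_left _ _)
    exact hcop.dvd_of_dvd_mul_right (EuclideanDomain.gcd_dvd_right _ _)
  · exact EuclideanDomain.dvd_gcd (EuclideanDomain.gcd_dvd_left _ _)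
      ((EuclideanDomain.gcd_dvd_right _ _).mul_right u)

lemma gcd_hp_add_mul (m : ℕ) (hm : 0 < m) (r : ℕ) :
    ∀ k, Associated (EuclideanDomain.gcd (hp m) (hp (r + k * m))) (EuclideanDomain.gcd (hp m) (hp r)) := by
  intro k
  induction k with
  | zero => simpa using Associated.refl _
  | succ k ih =>
    have key : hp (r + (k + 1) * m) =
        hp (r + k * m + 1) * hp m - hp (r + k * m) * hp (m - 1) := by
      have h1 : r + (k + 1) * m = (r + k * m) + (m - 1) + 1 := by
        rw [Nat.succ_mul]; omega
      have h2 : m - 1 + 1 = m := by omega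
      rw [h1, hp_add (r + k * m) (m - 1), h2]
    rw [key]
    have step1 : Associated (EuclideanDomain.gcd (hp m) (hp (r + k * m + 1) * hp m - hp (r + k * m) * hp (m - 1)))
        (EuclideanDomain.gcd (hp m) (hp (r + k * m) * hp (m - 1))) := gcd_assoc_sub_mul _ _ _
    have hcop : IsCoprime (hp m) (hp (m - 1)) := by
      have := (hp_coprime (m - 1)).symm
      rwa [Nat.sub_add_cancel hm] at this
    exact step1.trans ((gcd_assoc_coprime_mul _ _ _ hcop).trans ih)

lemma gcd_hp (m n : ℕ) : Associated (EuclideanDomain.gcd (hp m) (hp n)) (hp (Nat.gcd m n)) := by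
  induction m, n using Nat.gcd.induction with
  | H0 n =>
    rw [hp_zero, EuclideanDomain.gcd_zero_left, Nat.gcd_zero_left]
  | H1 m n hm ih =>
    have hn : n = n % m + (n / m) * m := by
      rw [Nat.add_comm, Nat.mul_comm, Nat.div_add_mod]
    have s1 : Associated (EuclideanDomain.gcd (hp m) (hp n))
        (EuclideanDomain.gcd (hp m) (hp (n % m))) := by
      conv_lhs => rw [hn]
      exact gcd_hp_add_mul m hm (n % m) (n / m)
    rw [Nat.gcd_rec]
    exact s1.trans ((gcd_assoc_comm _ _).trans ih)

end gcd

lemma hp_monic_deg : ∀ n, (hp (n + 1)).Monic ∧ (hp (n + 1)).degree = n := by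
  intro n
  induction n using Nat.twoStepInduction with
  | zero => exact ⟨monic_one, degree_one⟩
  | one =>
    have : hp 2 = Polynomial.X := by rw [hp_add_two, hp_one, hp_zero]; ring
    rw [this]
    exact ⟨monic_X, degree_X⟩
  | more n ih2 ih1 =>
    obtain ⟨hm1, hd1⟩ := ih1
    obtain ⟨hm2, hd2⟩ := ih2
    have hmx : (Polynomial.X * hp (n + 1 + 1)).Monic := monic_X.mul hm1
    have hdx : (Polynomial.X * hp (n + 1 + 1)).degree = ((n + 2 : ℕ) : WithBot ℕ) := by
      rw [degree_mul, degree_X, hd1]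
      norm_cast
      omega
    have hlt : (hp (n + 1)).degree < (Polynomial.X * hp (n + 1 + 1)).degree := by
      rw [hdx, hd2]
      exact_mod_cast Nat.lt_succ_of_lt (Nat.lt_succ_self n)
    have e : hp (n + 2 + 1) = Polynomial.X * hp (n + 1 + 1) - hp (n + 1) := by
      rw [show n + 2 + 1 = (n + 1) + 2 from rfl, hp_add_two]
    constructor
    · rw [e]
      exact hmx.sub_of_left hlt
    · rw [e, sub_eq_add_neg, degree_add_eq_left_of_degree_lt (by rwa [degree_neg]), hdx]

lemma natDegree_assoc {p q : Polynomial ℚ} (h : Associated p q) : p.natDegree = q.natDegree := by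
  obtain ⟨u, rfl⟩ := h
  rcases eq_or_ne p 0 with rfl | hp0
  · simp
  · rw [Polynomial.natDegree_mul hp0 (Units.ne_zero u),
      Polynomial.natDegree_eq_zero_of_isUnit u.isUnit, add_zero]

/-- for positive integers `k < ℓ`, the degree of
`gcd (g k, g ℓ)` in `ℚ[x]` equals `gcd (k+1, ℓ+1) - 1`, where `g j` is the
characteristic polynomial of `K_j`. -/
theorem stmt4 (k l : ℕ) (hk : 0 < k) (hkl : k < l) :
    (EuclideanDomain.gcd (Kmat k).charpoly (Kmat l).charpoly).natDegree =
      Nat.gcd (k + 1) (l + 1) - 1 := by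
  rw [charpoly_Kmat, charpoly_Kmat]
  have h := gcd_hp (k + 1) (l + 1)
  rw [natDegree_assoc h]
  set d := Nat.gcd (k + 1) (l + 1) with hd
  have hd1 : 0 < d := Nat.gcd_pos_of_pos_left _ (Nat.succ_pos k)
  have := (hp_monic_deg (d - 1)).2
  rw [Nat.sub_add_cancel hd1] at this
  exact Polynomial.natDegree_eq_of_degree_eq_some this
end

section
/- Let $g_j(x)$ be the characteristic polynomial of the tridiagonal 0-1 matrix $K_j$. For positive integers $k < \ell$, $g_k(x)$ divides $g_\ell(x)$ in $\mathbb{Q}[x]$ if and only if $(k+1) \mid (\ell+1)$. -/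
/-!
Expanding `det (X - K_n)` along its first row gives `g_{n+2} = X g_{n+1} - g_n`, so `g_n` is the
rescaled Chebyshev polynomial `S_n` (`S_n(2 cos θ) = sin ((n+1)θ) / sin θ`). These satisfy the
addition formula `S_{m+n} = S_m S_n - S_{m-1} S_{n-1}`; taking `m = k` shows that shifting the index
by `k + 1` multiplies `S_n` by `-S_{k-1}` modulo `S_k`, which is invertible modulo `S_k` because
consecutive `S`'s are coprime. Hence `S_k ∣ S_l` iff `S_k ∣ S_{r-1}` with `r = (l+1) mod (k+1)`, and for `0 < r` the
monic `S_k` cannot divide `S_{r-1}`, of smaller degree, while `S_{-1} = 0`.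
-/

open Polynomial

namespace Polynomial.Chebyshev

variable (R : Type*) [CommRing R]

theorem S_add (m n : ℤ) : S R (m + n) = S R m * S R n - S R (m - 1) * S R (n - 1) := by
  induction m using Polynomial.Chebyshev.induct with
  | zero => simp
  | one => simpa [add_comm] using S_add_one R n
  | add_two m ih1 ih0 =>
    linear_combination (norm := ring_nf) X * ih1 - ih0 + S_add_two R (m + n) -
      S R n * S_add_two R m + S R (n - 1) * S_add_one R m
  | neg_add_one m ih0 ih1 =>
    linear_combination (norm := ring_nf) X * ih0 - ih1 + S_sub_one R (-m + n) -
      S R n * S_sub_one R (-m) + S R (n - 1) * S_sub_one R (-m - 1)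

theorem isCoprime_S_S_add_one (n : ℤ) : IsCoprime (S R n) (S R (n + 1)) :=
  ⟨S R n - X * S R (n + 1), S R (n + 1), by linear_combination S_sq_add_S_sq R n⟩

theorem S_dvd_S_add_mul_sub (k n : ℤ) (q : ℕ) :
    S R k ∣ S R (n + q * (k + 1)) - (-S R (k - 1)) ^ q * S R n := by
  induction q with
  | zero => simp
  | succ q ih =>
    obtain ⟨t, ht⟩ := ih
    have := S_add R k (n + q * (k + 1) + 1)
    refine ⟨S R (n + q * (k + 1) + 1) - S R (k - 1) * t, ?_⟩
    rw [add_sub_cancel_right] at this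
    push_cast
    rw [show n + (q + 1) * (k + 1) = k + (n + q * (k + 1) + 1) by ring, this]
    linear_combination (-S R (k - 1)) * ht

theorem S_dvd_S_add_mul_iff (k n : ℤ) (q : ℕ) :
    S R k ∣ S R (n + q * (k + 1)) ↔ S R k ∣ S R n := by
  have hcop : IsCoprime (S R k) ((-S R (k - 1)) ^ q) := by
    simpa using ((isCoprime_S_S_add_one R (k - 1)).symm.neg_right).pow_right
  rw [dvd_iff_dvd_of_dvd_sub (S_dvd_S_add_mul_sub R k n q)]
  exact ⟨hcop.dvd_of_dvd_mul_left, (dvd_mul_of_dvd_right · _)⟩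

theorem S_natCast_monic_natDegree [Nontrivial R] :
    ∀ n : ℕ, (S R n).Monic ∧ (S R n).natDegree = n
  | 0 => by simp
  | 1 => by simp [monic_X]
  | n + 2 => by
    obtain ⟨hm1, hd1⟩ := S_natCast_monic_natDegree (n + 1)
    obtain ⟨-, hd0⟩ := S_natCast_monic_natDegree n
    push_cast at hm1 hd1 ⊢
    have hdX : (X * S R (n + 1)).natDegree = n + 2 := by
      rw [natDegree_X_mul hm1.ne_zero, hd1]
    have hlt : (S R n).natDegree < (X * S R (n + 1)).natDegree := by omega
    rw [S_add_two]
    exact ⟨(monic_X.mul hm1).sub_of_left (degree_lt_degree hlt),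
      (natDegree_sub_eq_left_of_natDegree_lt hlt).trans hdX⟩

theorem S_dvd_S_iff [Nontrivial R] (k l : ℕ) : S R k ∣ S R l ↔ k + 1 ∣ l + 1 := by
  obtain ⟨r, q, hr, hl⟩ : ∃ r q : ℕ, r < k + 1 ∧ l + 1 = r + q * (k + 1) :=
    ⟨(l + 1) % (k + 1), (l + 1) / (k + 1), Nat.mod_lt _ k.succ_pos, by
      rw [mul_comm, Nat.mod_add_div]⟩
  have hl' : (l : ℤ) = (r - 1 : ℤ) + q * (k + 1) := by
    have := congrArg (Nat.cast : ℕ → ℤ) hl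
    push_cast at this
    linarith
  rw [hl', S_dvd_S_add_mul_iff, hl, Nat.dvd_add_left (dvd_mul_left _ _)]
  rcases r with _ | r
  · simp
  · obtain ⟨hmk, hdk⟩ := S_natCast_monic_natDegree R k
    obtain ⟨hmr, hdr⟩ := S_natCast_monic_natDegree R r
    push_cast
    rw [add_sub_cancel_right]
    exact iff_of_false (hmk.not_dvd_of_natDegree_lt hmr.ne_zero (by omega))
      (Nat.not_dvd_of_pos_of_lt r.succ_pos hr)

end Polynomial.Chebyshev

theorem Matrix.charmatrix_submatrix {R m n : Type*} [CommRing R] [Fintype m] [DecidableEq m]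
    [Fintype n] [DecidableEq n]
    (M : Matrix n n R) {e : m → n} (he : Function.Injective e) :
    (M.charmatrix).submatrix e e = (M.submatrix e e).charmatrix := by
  ext i j : 1
  rcases eq_or_ne i j with rfl | h
  · simp [Matrix.charmatrix_apply_eq]
  · simp [Matrix.charmatrix_apply_ne _ _ _ h, Matrix.charmatrix_apply_ne _ _ _ (he.ne h)]

theorem Kmat_submatrix_succ (n : ℕ) : (Kmat (n + 1)).submatrix Fin.succ Fin.succ = Kmat n := by
  ext i j
  simp [Kmat]

theorem charpoly_Kmat_add_two (n : ℕ) :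
    (Kmat (n + 2)).charpoly = X * (Kmat (n + 1)).charpoly - (Kmat n).charpoly := by
  have h00 : Kmat (n + 2) 0 0 = 0 := by simp [Kmat]
  have h01 : Kmat (n + 2) 0 1 = 1 := by simp [Kmat]
  have h10 : Kmat (n + 2) 1 0 = 1 := by simp [Kmat]
  have h0j (j : Fin n) : (Kmat (n + 2)).charmatrix 0 j.succ.succ = 0 := by
    simp [Matrix.charmatrix_apply_ne _ _ _ (Fin.succ_ne_zero _).symm, Kmat]
  have hj0 (j : Fin n) : Kmat (n + 2) j.succ.succ 0 = 0 := by simp [Kmat]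
  have hminor : (Kmat (n + 2)).charmatrix.submatrix Fin.succ Fin.succ =
      (Kmat (n + 1)).charmatrix := by
    rw [Matrix.charmatrix_submatrix _ (Fin.succ_injective _), Kmat_submatrix_succ]
  have hminor2 : (Kmat (n + 2)).charmatrix.submatrix (Fin.succ ∘ Fin.succ) (Fin.succ ∘ Fin.succ) =
      (Kmat n).charmatrix := by
    rw [Matrix.charmatrix_submatrix _ ((Fin.succ_injective _).comp (Fin.succ_injective _)),
      ← Matrix.submatrix_submatrix, Kmat_submatrix_succ, Kmat_submatrix_succ]
  have hB : ((Kmat (n + 2)).charmatrix.submatrix Fin.succ (Fin.succAbove 1)).det =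
      -(Kmat n).charpoly := by
    have hcols : (Fin.succAbove 1 ∘ Fin.succ : Fin n → Fin (n + 2)) = Fin.succ ∘ Fin.succ := by
      ext j; simp [Fin.succAbove, Fin.lt_def]
    rw [Matrix.det_succ_column_zero, Fin.sum_univ_succ]
    simp [h10, hj0, Matrix.submatrix_submatrix, hcols, hminor2, Matrix.charpoly]
  rw [Matrix.charpoly, Matrix.det_succ_row_zero, Fin.sum_univ_succ, Fin.sum_univ_succ]
  simp [h00, h01, h0j, hminor, hB, Matrix.charpoly]
  ring

theorem charpoly_Kmat_s5 : ∀ n : ℕ, (Kmat n).charpoly = Chebyshev.S ℚ n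
  | 0 => by simp
  | 1 => by simp [Matrix.charpoly, Kmat]
  | n + 2 => by
    rw [charpoly_Kmat_add_two, charpoly_Kmat_s5 (n + 1), charpoly_Kmat_s5 n]
    push_cast
    rw [Chebyshev.S_add_two]

theorem stmt5_general (k l : ℕ) :
    (Kmat k).charpoly ∣ (Kmat l).charpoly ↔ (k + 1) ∣ (l + 1) := by
  rw [charpoly_Kmat_s5, charpoly_Kmat_s5, Chebyshev.S_dvd_S_iff]

/-- for positive integers `k < ℓ`, `g k ∣ g ℓ` in `ℚ[x]` iff
`(k+1) ∣ (ℓ+1)`, where `g j` is the characteristic polynomial of `K_j`. -/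
theorem stmt5 (k l : ℕ) (hk : 0 < k) (hkl : k < l) :
    (Kmat k).charpoly ∣ (Kmat l).charpoly ↔ (k + 1) ∣ (l + 1) :=
  stmt5_general k l
end

section
/- For elements $t_1, t_2$ of a commutative ring, the characteristic polynomial of the $j \times j$ tridiagonal matrix $S_j(t_1,t_2)$ (with $t_2$ on the superdiagonal and $t_1$ on the subdiagonal) equals $g_{j;t_1,t_2}(x) = \sum_{i=0}^{\lfloor j/2 \rfloor} (-1)^i (t_1 t_2)^i \binom{j-i}{i} x^{j-2i}$. -/
open Polynomial

/-- The `j × j` tridiagonal matrix with `t2` on the superdiagonal and `t1` on the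
subdiagonal, zeros elsewhere. -/
def Smat (R : Type*) [CommRing R] (t1 t2 : R) (j : ℕ) : Matrix (Fin j) (Fin j) R :=
  Matrix.of fun i k =>
    if (i : ℕ) + 1 = (k : ℕ) then t2 else if (k : ℕ) + 1 = (i : ℕ) then t1 else 0

/-- The charmatrix of `Smat`, defined directly. -/
noncomputable def Mm (R : Type*) [CommRing R] (t1 t2 : R) (j : ℕ) :
    Matrix (Fin j) (Fin j) (Polynomial R) :=
  Matrix.of fun i k =>
    if (i : ℕ) = (k : ℕ) then X
    else if (i : ℕ) + 1 = (k : ℕ) then -C t2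
    else if (k : ℕ) + 1 = (i : ℕ) then -C t1 else 0

lemma Mm_apply (R : Type*) [CommRing R] (t1 t2 : R) (j : ℕ) (i k : Fin j) :
    Mm R t1 t2 j i k =
      if (i : ℕ) = (k : ℕ) then X
      else if (i : ℕ) + 1 = (k : ℕ) then -C t2
      else if (k : ℕ) + 1 = (i : ℕ) then -C t1 else 0 := rfl

lemma charmatrix_Smat (R : Type*) [CommRing R] (t1 t2 : R) (j : ℕ) :
    Matrix.charmatrix (Smat R t1 t2 j) = Mm R t1 t2 j := by
  ext i k
  rcases eq_or_ne i k with h | h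
  · subst h
    rw [Matrix.charmatrix_apply_eq, Mm_apply]
    simp [Smat]
  · have hv : (i : ℕ) ≠ (k : ℕ) := fun hh => h (Fin.ext hh)
    rw [Matrix.charmatrix_apply_ne _ _ _ h, Mm_apply, if_neg hv]
    simp only [Smat, Matrix.of_apply]
    split_ifs <;> simp

/-- The claimed characteristic polynomial. -/
noncomputable def rhsP (R : Type*) [CommRing R] (t1 t2 : R) (j : ℕ) : Polynomial R :=
  ∑ i ∈ Finset.range (j / 2 + 1),
    (-1 : Polynomial R) ^ i * C (t1 * t2) ^ i *
      ((j - i).choose i : Polynomial R) * X ^ (j - 2 * i)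

lemma Mm_sub1 (R : Type*) [CommRing R] (t1 t2 : R) (n : ℕ) :
    (Mm R t1 t2 (n + 2)).submatrix Fin.succ ((0 : Fin (n + 2)).succAbove)
      = Mm R t1 t2 (n + 1) := by
  ext i k
  simp only [Fin.succAbove_zero, Matrix.submatrix_apply, Mm_apply, Fin.val_succ]
  simp only [add_left_inj]

lemma Mm_sub2 (R : Type*) [CommRing R] (t1 t2 : R) (n : ℕ) :
    ((Mm R t1 t2 (n + 2)).submatrix Fin.succ
        ((Fin.succ (0 : Fin (n + 1))).succAbove)).submatrix Fin.succ Fin.succ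
      = Mm R t1 t2 n := by
  ext i k
  simp only [Matrix.submatrix_apply, Fin.succ_succAbove_succ, Fin.succAbove_zero, Mm_apply,
    Fin.val_succ]
  simp only [add_left_inj]

lemma det_Mm_rec (R : Type*) [CommRing R] (t1 t2 : R) (n : ℕ) :
    (Mm R t1 t2 (n + 2)).det
      = X * (Mm R t1 t2 (n + 1)).det - C (t1 * t2) * (Mm R t1 t2 n).det := by
  rw [Matrix.det_succ_row_zero, Fin.sum_univ_succ, Fin.sum_univ_succ]
  have h00 : Mm R t1 t2 (n + 2) 0 0 = X := by rw [Mm_apply]; simp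
  have h01 : Mm R t1 t2 (n + 2) 0 (Fin.succ 0) = -C t2 := by
    rw [Mm_apply]; simp
  have htail : ∀ j : Fin n,
      Mm R t1 t2 (n + 2) 0 (Fin.succ (Fin.succ j)) = 0 := by
    intro j; rw [Mm_apply]; simp
  -- determinant of the second minor
  have hN : ((Mm R t1 t2 (n + 2)).submatrix Fin.succ
      ((Fin.succ (0 : Fin (n + 1))).succAbove)).det = -C t1 * (Mm R t1 t2 n).det := by
    set N := (Mm R t1 t2 (n + 2)).submatrix Fin.succ ((Fin.succ (0 : Fin (n + 1))).succAbove)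
      with hNdef
    rw [Matrix.det_succ_column_zero, Fin.sum_univ_succ]
    have hN00 : N 0 0 = -C t1 := by
      simp only [hNdef, Matrix.submatrix_apply, Fin.succ_succAbove_zero, Mm_apply]
      simp
    have hNtail : ∀ i : Fin n, N (Fin.succ i) 0 = 0 := by
      intro i
      simp only [hNdef, Matrix.submatrix_apply, Fin.succ_succAbove_zero, Mm_apply, Fin.val_succ]
      simp
    have hNsub : N.submatrix ((0 : Fin (n + 1)).succAbove) Fin.succ = Mm R t1 t2 n := by
      have := Mm_sub2 R t1 t2 n
      rw [← this, hNdef]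
      ext i k
      simp [Fin.succAbove_zero]
    rw [hN00, hNsub]
    simp only [Fin.val_succ]
    rw [Finset.sum_eq_zero]
    · simp
    · intro i _
      rw [hNtail]
      ring
  rw [h00, h01, hN, Mm_sub1, Finset.sum_eq_zero]
  · simp only [Fin.val_zero, pow_zero, one_mul, Fin.val_succ, Fin.val_zero, zero_add, pow_one,
      add_zero]
    rw [C_mul]
    ring
  · intro j _
    rw [htail j]
    ring

lemma rhsP_zero (R : Type*) [CommRing R] (t1 t2 : R) : rhsP R t1 t2 0 = 1 := by
  simp [rhsP]

lemma rhsP_one (R : Type*) [CommRing R] (t1 t2 : R) : rhsP R t1 t2 1 = X := by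
  simp [rhsP]

lemma rhsP_rec (R : Type*) [CommRing R] (t1 t2 : R) (n : ℕ) :
    rhsP R t1 t2 (n + 2) = X * rhsP R t1 t2 (n + 1) - C (t1 * t2) * rhsP R t1 t2 n := by
  classical
  set c : Polynomial R := C (t1 * t2) with hc
  have hdiv : (n + 2) / 2 + 1 = (n / 2 + 1) + 1 := by omega
  -- expand LHS
  rw [rhsP, hdiv, Finset.sum_range_succ']
  -- rewrite each shifted term using Pascal
  have hterm : ∀ i ∈ Finset.range (n / 2 + 1),
      (-1 : Polynomial R) ^ (i + 1) * c ^ (i + 1) *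
          ((n + 2 - (i + 1)).choose (i + 1) : Polynomial R) * X ^ (n + 2 - 2 * (i + 1))
        = (-1 : Polynomial R) ^ (i + 1) * c ^ (i + 1) *
            ((n - i).choose (i + 1) : Polynomial R) * X ^ (n - 2 * i)
          + (-1 : Polynomial R) ^ (i + 1) * c ^ (i + 1) *
            ((n - i).choose i : Polynomial R) * X ^ (n - 2 * i) := by
    intro i hi
    rw [Finset.mem_range] at hi
    have h1 : n + 2 - (i + 1) = (n - i) + 1 := by omega
    have h2 : n + 2 - 2 * (i + 1) = n - 2 * i := by omega
    rw [h1, h2, Nat.choose_succ_succ]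
    push_cast
    ring
  rw [Finset.sum_congr rfl hterm, Finset.sum_add_distrib]
  -- second part equals -c * rhsP n
  have hB : ∑ i ∈ Finset.range (n / 2 + 1),
      (-1 : Polynomial R) ^ (i + 1) * c ^ (i + 1) *
        ((n - i).choose i : Polynomial R) * X ^ (n - 2 * i)
      = -c * rhsP R t1 t2 n := by
    rw [rhsP, Finset.mul_sum]
    refine Finset.sum_congr rfl fun i _ => ?_
    ring
  -- first part plus X^(n+2) equals X * rhsP (n+1)
  have hA : X * rhsP R t1 t2 (n + 1)
      = (∑ i ∈ Finset.range (n / 2 + 1),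
          (-1 : Polynomial R) ^ (i + 1) * c ^ (i + 1) *
            ((n - i).choose (i + 1) : Polynomial R) * X ^ (n - 2 * i))
        + X ^ (n + 2) := by
    rw [rhsP, Finset.mul_sum]
    have hstep : ∀ i ∈ Finset.range ((n + 1) / 2 + 1),
        X * ((-1 : Polynomial R) ^ i * c ^ i *
            ((n + 1 - i).choose i : Polynomial R) * X ^ (n + 1 - 2 * i))
          = (-1 : Polynomial R) ^ i * c ^ i *
            ((n + 1 - i).choose i : Polynomial R) * X ^ (n + 2 - 2 * i) := by
      intro i hi
      rw [Finset.mem_range] at hi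
      have h2i : 2 * i ≤ n + 1 := by omega
      have : n + 2 - 2 * i = (n + 1 - 2 * i) + 1 := by omega
      rw [this, pow_succ]
      ring
    rw [Finset.sum_congr rfl hstep]
    have hsubset : Finset.range ((n + 1) / 2 + 1) ⊆ Finset.range (n / 2 + 1 + 1) := by
      apply Finset.range_subset_range.2; omega
    rw [Finset.sum_subset hsubset (by
      intro i hi hni
      rw [Finset.mem_range] at hi hni
      have : n + 1 - i < i := by omega
      rw [Nat.choose_eq_zero_of_lt this]
      simp)]
    rw [Finset.sum_range_succ']
    congr 1
    · refine Finset.sum_congr rfl fun i hi => ?_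
      rw [Finset.mem_range] at hi
      have h1 : n + 1 - (i + 1) = n - i := by omega
      have h2 : n + 2 - 2 * (i + 1) = n - 2 * i := by omega
      rw [h1, h2]
    · simp
  have hf0 : (-1 : Polynomial R) ^ 0 * c ^ 0 *
      ((n + 2 - 0).choose 0 : Polynomial R) * X ^ (n + 2 - 2 * 0) = X ^ (n + 2) := by
    simp
  rw [hB, hf0, hA]
  ring

theorem det_Mm (R : Type*) [CommRing R] (t1 t2 : R) (j : ℕ) :
    (Mm R t1 t2 j).det = rhsP R t1 t2 j := by
  have key : ∀ j : ℕ, (Mm R t1 t2 j).det = rhsP R t1 t2 j ∧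
      (Mm R t1 t2 (j + 1)).det = rhsP R t1 t2 (j + 1) := by
    intro j
    induction j with
    | zero =>
      constructor
      · rw [rhsP_zero]; exact Matrix.det_fin_zero
      · rw [rhsP_one, Matrix.det_fin_one, Mm_apply]; simp
    | succ n ih =>
      refine ⟨ih.2, ?_⟩
      rw [det_Mm_rec, ih.1, ih.2, rhsP_rec]
  exact (key j).1

/-- the characteristic polynomial of `S_j(t1,t2)` equals
`∑_{i=0}^{⌊j/2⌋} (-1)^i (t1 t2)^i C(j-i, i) x^{j-2i}`. -/
theorem stmt12 (R : Type*) [CommRing R] (t1 t2 : R) (j : ℕ) :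
    (Smat R t1 t2 j).charpoly =
      ∑ i ∈ Finset.range (j / 2 + 1),
        (-1 : Polynomial R) ^ i * C (t1 * t2) ^ i *
          ((j - i).choose i : Polynomial R) * X ^ (j - 2 * i) := by
  rw [Matrix.charpoly, charmatrix_Smat, det_Mm, rhsP]
end
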